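/- Let p, q ∈ [1,∞), let (b^n) ⊂ L^q([0,T]; L^p(ℝ^d)) converge to b in L^q([0,T]; L^p(ℝ^d)), and let μ^n, μ : [0,T] → P(ℝ^d) be (measurable) flows of probability measures such that μ^n_t converges weakly to μ_t for every t ∈ [0,T]. Then b^n_t ∗ μ^n_t → b_t ∗ μ_t in L^q([0,T]; L^p(ℝ^d)). -/

import Mathlib

open MeasureTheory Filter Set
open scoped ENNReal NNReal Topology

/-!
Split `b^n_t ∗ μ^n_t - b_t ∗ μ_t = (b^n_t - b_t) ∗ μ^n_t + (b_t ∗ μ^n_t - b_t ∗ μ_t)`.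
Convolution with a probability measure is a contraction of `L^p` (Jensen's inequality and
translation invariance), which controls the first term by `‖b^n_t - b_t‖_p`.

For the second term fix `t`. If `g` is continuous with compact support, then
`g ∗ μ^n_t → g ∗ μ_t` pointwise by weak convergence, and `|g ∗ μ^n_t - g ∗ μ_t|^p` is dominated
by `2^(p-1) (|g|^p ∗ μ^n_t + |g|^p ∗ μ_t)`, which converges pointwise and whose integral does not
depend on `n`; the generalised dominated convergence theorem gives convergence in `L^p`. Density
of such `g` in `L^p` and the contraction property pass this to `b_t`. Finally
`‖b_t ∗ μ^n_t - b_t ∗ μ_t‖_p ≤ 2 ‖b_t‖_p`, so dominated convergence in `t` concludes.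
-/

section Jensen

variable {α : Type*} [MeasurableSpace α] {ν : Measure α} [IsProbabilityMeasure ν]

theorem rpow_lintegral_le_lintegral_rpow {h : α → ℝ≥0∞} (hh : AEMeasurable h ν) {r : ℝ}
    (hr : 1 ≤ r) : (∫⁻ a, h a ∂ν) ^ r ≤ ∫⁻ a, h a ^ r ∂ν := by
  have hr0 : 0 < r := zero_lt_one.trans_le hr
  have key := eLpNorm_le_eLpNorm_of_exponent_le (μ := ν) (ENNReal.one_le_ofReal.mpr hr)
    hh.aestronglyMeasurable
  rw [eLpNorm_one_eq_lintegral_enorm, eLpNorm_eq_lintegral_rpow_enorm_toReal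
    (by simpa using hr0) ENNReal.ofReal_ne_top, ENNReal.toReal_ofReal hr0.le] at key
  simp only [enorm_eq_self] at key
  calc (∫⁻ a, h a ∂ν) ^ r ≤ ((∫⁻ a, h a ^ r ∂ν) ^ (1 / r)) ^ r := by gcongr
    _ = ∫⁻ a, h a ^ r ∂ν := by rw [← ENNReal.rpow_mul, one_div_mul_cancel hr0.ne', ENNReal.rpow_one]

theorem enorm_integral_rpow_le {E : Type*} [NormedAddCommGroup E] [NormedSpace ℝ E]
    {f : α → E} (hf : AEStronglyMeasurable f ν) {r : ℝ} (hr : 1 ≤ r) :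
    ‖∫ a, f a ∂ν‖ₑ ^ r ≤ ∫⁻ a, ‖f a‖ₑ ^ r ∂ν :=
  (ENNReal.rpow_le_rpow (enorm_integral_le_lintegral_enorm f) (by linarith)).trans
    (rpow_lintegral_le_lintegral_rpow hf.enorm hr)

end Jensen

section Pratt

variable {α : Type*} [MeasurableSpace α] {μ : Measure α}

theorem tendsto_lintegral_tsub_of_tendsto_lintegral {G : ℕ → α → ℝ≥0∞} {g : α → ℝ≥0∞}
    (hG : ∀ n, AEMeasurable (G n) μ) (hGg : ∀ᵐ a ∂μ, Tendsto (G · a) atTop (𝓝 (g a)))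
    (hint : Tendsto (fun n => ∫⁻ a, G n a ∂μ) atTop (𝓝 (∫⁻ a, g a ∂μ)))
    (hfin : ∫⁻ a, g a ∂μ ≠ ∞) :
    Tendsto (fun n => ∫⁻ a, G n a - g a ∂μ) atTop (𝓝 0) := by
  have hg : AEMeasurable g μ := aemeasurable_of_tendsto_metrizable_ae' hG hGg
  -- `(G - g) + g = max G g = G + (g - G)`, and `g - G → 0` dominated by `g`.
  have hsym : Tendsto (fun n => ∫⁻ a, g a - G n a ∂μ) atTop (𝓝 0) := by
    have := tendsto_lintegral_of_dominated_convergence' (F := fun n a => g a - G n a) (f := 0) g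
      (fun n => hg.sub (hG n)) (fun n => ae_of_all _ fun a => tsub_le_self) hfin ?_
    · simpa using this
    filter_upwards [hGg, ae_lt_top' hg hfin] with a ha hga
    simpa using ENNReal.Tendsto.sub tendsto_const_nhds ha (Or.inl hga.ne)
  have hmax : ∀ n, ∫⁻ a, G n a - g a ∂μ + ∫⁻ a, g a ∂μ
      = ∫⁻ a, G n a ∂μ + ∫⁻ a, g a - G n a ∂μ := by
    intro n
    rw [← lintegral_add_right' _ hg, ←
      lintegral_add_right' _ (g := fun a => g a - G n a) (hg.sub (hG n))]
    congr 1 with a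
    rw [tsub_add_eq_max, add_comm, tsub_add_eq_max, max_comm]
  have := ENNReal.Tendsto.sub (hint.add hsym) tendsto_const_nhds (Or.inr hfin)
  simp_rw [← hmax, ENNReal.add_sub_cancel_right hfin, add_zero, tsub_self] at this
  exact this

theorem tendsto_lintegral_zero_of_le_of_tendsto {F G : ℕ → α → ℝ≥0∞} {g : α → ℝ≥0∞}
    (hF : ∀ n, AEMeasurable (F n) μ) (hG : ∀ n, AEMeasurable (G n) μ)
    (hFG : ∀ n, F n ≤ᵐ[μ] G n) (hF0 : ∀ᵐ a ∂μ, Tendsto (F · a) atTop (𝓝 0))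
    (hGg : ∀ᵐ a ∂μ, Tendsto (G · a) atTop (𝓝 (g a)))
    (hint : Tendsto (fun n => ∫⁻ a, G n a ∂μ) atTop (𝓝 (∫⁻ a, g a ∂μ)))
    (hfin : ∫⁻ a, g a ∂μ ≠ ∞) :
    Tendsto (fun n => ∫⁻ a, F n a ∂μ) atTop (𝓝 0) := by
  have hg : AEMeasurable g μ := aemeasurable_of_tendsto_metrizable_ae' hG hGg
  have hmin : Tendsto (fun n => ∫⁻ a, min (F n a) (g a) ∂μ) atTop (𝓝 0) := by
    have := tendsto_lintegral_of_dominated_convergence' g (fun n => (hF n).min hg)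
      (fun n => ae_of_all _ fun a => min_le_right _ _) hfin
      (hF0.mono fun a ha => by simpa using ha.min (tendsto_const_nhds (x := g a)))
    simpa using this
  -- Where `F n` exceeds `g`, it is still below `g + (G n - g) = max (G n) g`.
  have hsplit : ∀ n, ∫⁻ a, F n a ∂μ ≤ ∫⁻ a, min (F n a) (g a) ∂μ + ∫⁻ a, G n a - g a ∂μ := by
    intro n
    rw [← lintegral_add_left' ((hF n).min hg)]
    refine lintegral_mono_ae ((hFG n).mono fun a ha => ?_)
    rcases le_total (F n a) (g a) with h | h
    · simp [h]
    · rw [min_eq_right h, add_tsub_cancel_of_le (h.trans ha)]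
      exact ha
  have := hmin.add (tendsto_lintegral_tsub_of_tendsto_lintegral hG hGg hint hfin)
  rw [zero_add] at this
  exact tendsto_of_tendsto_of_tendsto_of_le_of_le tendsto_const_nhds this (fun _ => zero_le)
    hsplit

end Pratt

theorem tendsto_eLpNorm'_zero {α ε : Type*} [MeasurableSpace α] [ENorm ε] {μ : Measure α}
    {f : ℕ → α → ε} {q : ℝ} (hq : 0 < q)
    (h : Tendsto (fun n => ∫⁻ a, ‖f n a‖ₑ ^ q ∂μ) atTop (𝓝 0)) :
    Tendsto (fun n => eLpNorm' (f n) q μ) atTop (𝓝 0) := by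
  have := (ENNReal.continuous_rpow_const (y := 1 / q)).tendsto 0 |>.comp h
  simpa [eLpNorm'_eq_lintegral_enorm, Function.comp_def, ENNReal.zero_rpow_of_pos hq,
    ENNReal.zero_rpow_of_pos (inv_pos.mpr hq)] using this

section MeasurableGroup

variable {G E : Type*} [AddGroup G] [MeasurableSpace G] [MeasurableSub₂ G]
  [NormedAddCommGroup E] {μ ν : Measure G} {p : ℝ≥0∞}

theorem lintegral_lintegral_comp_sub [MeasurableAdd G] [μ.IsAddRightInvariant] [SFinite μ]
    [SFinite ν] {H : G → ℝ≥0∞} (hH : Measurable H) :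
    ∫⁻ x, ∫⁻ y, H (x - y) ∂ν ∂μ = ν univ * ∫⁻ x, H x ∂μ := by
  rw [lintegral_lintegral_swap (f := fun x y => H (x - y)) (hH.comp measurable_sub).aemeasurable]
  simp only [lintegral_sub_right_eq_self, lintegral_const, mul_comm]

theorem lintegral_lintegral_rpow_comp_sub_le [MeasurableAdd G] [μ.IsAddRightInvariant]
    [SFinite μ] [IsProbabilityMeasure ν] {f : G → E} (hf : StronglyMeasurable f) {r : ℝ}
    (hr : 1 ≤ r) : ∫⁻ x, (∫⁻ y, ‖f (x - y)‖ₑ ∂ν) ^ r ∂μ ≤ ∫⁻ x, ‖f x‖ₑ ^ r ∂μ := by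
  have hsub : Measurable fun z : G × G => ‖f (z.1 - z.2)‖ₑ :=
    (hf.comp_measurable measurable_sub).enorm
  calc ∫⁻ x, (∫⁻ y, ‖f (x - y)‖ₑ ∂ν) ^ r ∂μ ≤ ∫⁻ x, ∫⁻ y, ‖f (x - y)‖ₑ ^ r ∂ν ∂μ :=
        lintegral_mono fun x => rpow_lintegral_le_lintegral_rpow
          (hsub.comp measurable_prodMk_left).aemeasurable hr
    _ = ∫⁻ x, ‖f x‖ₑ ^ r ∂μ := by
        rw [lintegral_lintegral_comp_sub (hf.enorm.pow_const r), measure_univ, one_mul]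

theorem ae_integrable_comp_sub [MeasurableAdd G] [μ.IsAddRightInvariant] [SFinite μ]
    [IsProbabilityMeasure ν] {f : G → E} (hf : StronglyMeasurable f) (hfp : MemLp f p μ)
    (hp1 : 1 ≤ p) (hp : p ≠ ∞) : ∀ᵐ x ∂μ, Integrable (fun y => f (x - y)) ν := by
  have hr : 1 ≤ p.toReal := ENNReal.toReal_mono hp hp1
  have hfin : ∫⁻ x, (∫⁻ y, ‖f (x - y)‖ₑ ∂ν) ^ p.toReal ∂μ ≠ ∞ :=
    ((lintegral_lintegral_rpow_comp_sub_le (ν := ν) hf hr).trans_lt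
      (lintegral_rpow_enorm_lt_top_of_eLpNorm_lt_top (zero_lt_one.trans_le hp1).ne' hp hfp.2)).ne
  have hmeas : Measurable fun x => (∫⁻ y, ‖f (x - y)‖ₑ ∂ν) ^ p.toReal :=
    (hf.comp_measurable measurable_sub).enorm.lintegral_prod_right'.pow_const _
  filter_upwards [ae_lt_top hmeas hfin] with x hx
  refine ⟨(hf.comp_measurable (measurable_const.sub measurable_id)).aestronglyMeasurable, ?_⟩
  exact (ENNReal.rpow_lt_top_iff_of_pos (by linarith)).mp hx

variable [NormedSpace ℝ E]

noncomputable def convMeasure (f : G → E) (ν : Measure G) (x : G) : E := ∫ y, f (x - y) ∂ν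

theorem MeasureTheory.StronglyMeasurable.convMeasure {f : G → E} (hf : StronglyMeasurable f)
    (ν : Measure G) [SFinite ν] : StronglyMeasurable (convMeasure f ν) :=
  (hf.comp_measurable measurable_sub).integral_prod_right'

theorem enorm_convMeasure_sub_rpow_le (ν ν' : Measure G) [IsProbabilityMeasure ν]
    [IsProbabilityMeasure ν'] {f : G → E} (hf : StronglyMeasurable f) {r : ℝ} (hr : 1 ≤ r)
    (x : G) : ‖convMeasure f ν x - convMeasure f ν' x‖ₑ ^ r
      ≤ 2 ^ (r - 1) * (∫⁻ y, ‖f (x - y)‖ₑ ^ r ∂ν + ∫⁻ y, ‖f (x - y)‖ₑ ^ r ∂ν') := by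
  have hfx : StronglyMeasurable fun y => f (x - y) :=
    hf.comp_measurable (measurable_const.sub measurable_id)
  calc ‖convMeasure f ν x - convMeasure f ν' x‖ₑ ^ r
      ≤ (‖convMeasure f ν x‖ₑ + ‖convMeasure f ν' x‖ₑ) ^ r := by
        gcongr
        exact enorm_sub_le
    _ ≤ 2 ^ (r - 1) * (‖convMeasure f ν x‖ₑ ^ r + ‖convMeasure f ν' x‖ₑ ^ r) :=
        ENNReal.rpow_add_le_mul_rpow_add_rpow _ _ hr
    _ ≤ _ := by
        gcongr <;> exact enorm_integral_rpow_le hfx.aestronglyMeasurable hr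

variable [MeasurableAdd G] [μ.IsAddRightInvariant] [SFinite μ]

theorem eLpNorm_convMeasure_le [IsProbabilityMeasure ν] {f : G → E} (hf : StronglyMeasurable f)
    (hp1 : 1 ≤ p) (hp : p ≠ ∞) : eLpNorm (convMeasure f ν) p μ ≤ eLpNorm f p μ := by
  have hp0 : p ≠ 0 := (zero_lt_one.trans_le hp1).ne'
  rw [eLpNorm_eq_lintegral_rpow_enorm_toReal hp0 hp, eLpNorm_eq_lintegral_rpow_enorm_toReal hp0 hp]
  gcongr ?_ ^ _
  refine (lintegral_mono fun x => ?_).trans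
    (lintegral_lintegral_rpow_comp_sub_le (ν := ν) hf (ENNReal.toReal_mono hp hp1))
  exact ENNReal.rpow_le_rpow (enorm_integral_le_lintegral_enorm _) ENNReal.toReal_nonneg

theorem convMeasure_add_ae_eq [IsProbabilityMeasure ν] {f g : G → E} (hf : StronglyMeasurable f)
    (hfp : MemLp f p μ) (hg : StronglyMeasurable g) (hgp : MemLp g p μ) (hp1 : 1 ≤ p)
    (hp : p ≠ ∞) : convMeasure (f + g) ν =ᵐ[μ] convMeasure f ν + convMeasure g ν := by
  filter_upwards [ae_integrable_comp_sub (ν := ν) hf hfp hp1 hp,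
    ae_integrable_comp_sub (ν := ν) hg hgp hp1 hp] with x hfx hgx
  exact integral_add hfx hgx

theorem eLpNorm_convMeasure_sub_le (ν ν' : Measure G) [IsProbabilityMeasure ν]
    [IsProbabilityMeasure ν'] {f : G → E} (hf : StronglyMeasurable f) (hp1 : 1 ≤ p)
    (hp : p ≠ ∞) : eLpNorm (convMeasure f ν - convMeasure f ν') p μ ≤ 2 * eLpNorm f p μ := by
  rw [two_mul]
  exact (eLpNorm_sub_le (hf.convMeasure ν).aestronglyMeasurable
    (hf.convMeasure ν').aestronglyMeasurable hp1).trans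
    (add_le_add (eLpNorm_convMeasure_le hf hp1 hp) (eLpNorm_convMeasure_le hf hp1 hp))

theorem eLpNorm_convMeasure_sub_convMeasure_le (ν ν' : Measure G) [IsProbabilityMeasure ν]
    [IsProbabilityMeasure ν'] {f f' : G → E} (hf : StronglyMeasurable f) (hfp : MemLp f p μ)
    (hf' : StronglyMeasurable f') (hp1 : 1 ≤ p) (hp : p ≠ ∞) :
    eLpNorm (convMeasure f' ν - convMeasure f ν') p μ
      ≤ eLpNorm (f' - f) p μ + eLpNorm (convMeasure f ν - convMeasure f ν') p μ := by
  by_cases hd : eLpNorm (f' - f) p μ = ∞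
  · simp [hd]
  have hdm : StronglyMeasurable (f' - f) := hf'.sub hf
  have hsplit : convMeasure f' ν =ᵐ[μ] convMeasure (f' - f) ν + convMeasure f ν := by
    simpa using convMeasure_add_ae_eq (ν := ν) hdm
      ⟨hdm.aestronglyMeasurable, lt_top_iff_ne_top.2 hd⟩ hf hfp hp1 hp
  calc eLpNorm (convMeasure f' ν - convMeasure f ν') p μ
      = eLpNorm (convMeasure (f' - f) ν + (convMeasure f ν - convMeasure f ν')) p μ :=
        eLpNorm_congr_ae <| hsplit.mono fun x hx => by simp [hx, add_sub_assoc]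
    _ ≤ eLpNorm (convMeasure (f' - f) ν) p μ + eLpNorm (convMeasure f ν - convMeasure f ν') p μ :=
        eLpNorm_add_le (hdm.convMeasure ν).aestronglyMeasurable
          ((hf.convMeasure ν).sub (hf.convMeasure ν')).aestronglyMeasurable hp1
    _ ≤ _ := by gcongr; exact eLpNorm_convMeasure_le hdm hp1 hp

end MeasurableGroup

section WeakConvergence

variable {G : Type*} [NormedAddCommGroup G] [MeasurableSpace G] [BorelSpace G]
  {νs : ℕ → ProbabilityMeasure G} {ν : ProbabilityMeasure G}

theorem tendsto_convMeasure_apply_of_hasCompactSupport (hν : Tendsto νs atTop (𝓝 ν))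
    {φ : G → ℝ} (hφ : Continuous φ) (hφs : HasCompactSupport φ) (x : G) :
    Tendsto (fun n => convMeasure φ (νs n) x) atTop (𝓝 (convMeasure φ ν x)) :=
  ProbabilityMeasure.tendsto_iff_forall_integral_tendsto.mp hν
    ((⟨⟨φ, hφ⟩, hφs⟩ : CompactlySupportedContinuousMap G ℝ).toBoundedContinuousFunction
      |>.compContinuous ⟨(x - ·), by fun_prop⟩)

theorem tendsto_lintegral_enorm_rpow_comp_sub_of_hasCompactSupport
    (hν : Tendsto νs atTop (𝓝 ν)) {E : Type*} [NormedAddCommGroup E] {g : G → E}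
    (hg : Continuous g) (hgs : HasCompactSupport g) {r : ℝ} (hr : 0 < r) (x : G) :
    Tendsto (fun n => ∫⁻ y, ‖g (x - y)‖ₑ ^ r ∂(νs n)) atTop
      (𝓝 (∫⁻ y, ‖g (x - y)‖ₑ ^ r ∂ν)) := by
  let φ : CompactlySupportedContinuousMap G ℝ≥0 :=
    ⟨⟨fun y => ‖g y‖₊ ^ r, (NNReal.continuous_rpow_const hr.le).comp hg.nnnorm⟩,
      hgs.comp_left (g := (‖·‖₊ ^ r)) (by simp [hr.ne'])⟩
  have := ProbabilityMeasure.tendsto_iff_forall_lintegral_tendsto.mp hν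
    (φ.toBoundedContinuousFunction.compContinuous ⟨(x - ·), by fun_prop⟩)
  simpa [φ, ENNReal.coe_rpow_of_nonneg _ hr.le, enorm_eq_nnnorm] using this

variable [SecondCountableTopology G] [LocallyCompactSpace G] {μ : Measure G}
  [μ.IsAddRightInvariant] [μ.Regular] {p : ℝ≥0∞}

theorem tendsto_eLpNorm_convMeasure_sub_of_hasCompactSupport (hν : Tendsto νs atTop (𝓝 ν))
    {g : G → ℝ} (hgc : Continuous g) (hgs : HasCompactSupport g) (hp1 : 1 ≤ p) (hp : p ≠ ∞) :
    Tendsto (fun n => eLpNorm (convMeasure g (νs n) - convMeasure g ν) p μ) atTop (𝓝 0) := by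
  have hp0 : p ≠ 0 := (zero_lt_one.trans_le hp1).ne'
  set r := p.toReal
  have hr : 1 ≤ r := ENNReal.toReal_mono hp hp1
  have hr0 : 0 < r := zero_lt_one.trans_le hr
  simp only [eLpNorm_eq_eLpNorm' hp0 hp]
  refine tendsto_eLpNorm'_zero hr0 ?_
  have hgm : StronglyMeasurable g := hgc.stronglyMeasurable
  have hsubm : Measurable fun z : G × G => ‖g (z.1 - z.2)‖ₑ ^ r :=
    ((hgm.comp_measurable measurable_sub).enorm).pow_const r
  set J : Measure G → G → ℝ≥0∞ := fun ρ x => ∫⁻ y, ‖g (x - y)‖ₑ ^ r ∂ρ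
  have hJm : ∀ ρ : ProbabilityMeasure G, Measurable (J ρ) := fun ρ => hsubm.lintegral_prod_right'
  have hJint : ∀ ρ ρ' : ProbabilityMeasure G, ∫⁻ x, 2 ^ (r - 1) * (J ρ x + J ρ' x) ∂μ
      = 2 ^ (r - 1) * (∫⁻ x, ‖g x‖ₑ ^ r ∂μ + ∫⁻ x, ‖g x‖ₑ ^ r ∂μ) := by
    intro ρ ρ'
    rw [lintegral_const_mul _ (f := fun x => J ρ x + J ρ' x) ((hJm ρ).add (hJm ρ')),
      lintegral_add_left (hJm ρ)]
    simp only [J, lintegral_lintegral_comp_sub (hgm.enorm.pow_const r), measure_univ, one_mul]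
  have hgfin : ∫⁻ x, ‖g x‖ₑ ^ r ∂μ ≠ ∞ :=
    (lintegral_rpow_enorm_lt_top_of_eLpNorm_lt_top hp0 hp
      (hgc.memLp_of_hasCompactSupport hgs).2).ne
  refine tendsto_lintegral_zero_of_le_of_tendsto
    (G := fun n x => 2 ^ (r - 1) * (J (νs n) x + J ν x))
    (g := fun x => 2 ^ (r - 1) * (J ν x + J ν x))
    (fun n => (((hgm.convMeasure _).sub (hgm.convMeasure _)).enorm.pow_const r).aemeasurable)
    (fun n => ((hJm _).add (hJm _)).const_mul _ |>.aemeasurable)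
    (fun n => ae_of_all _ fun x => enorm_convMeasure_sub_rpow_le _ _ hgm hr x) ?_ ?_ ?_ ?_
  · refine ae_of_all _ fun x => ?_
    have := ((tendsto_convMeasure_apply_of_hasCompactSupport hν hgc hgs x).sub_const
      (convMeasure g ν x)).enorm.ennrpow_const r
    simpa [ENNReal.zero_rpow_of_pos hr0] using this
  · exact ae_of_all _ fun x => ENNReal.Tendsto.const_mul
      ((tendsto_lintegral_enorm_rpow_comp_sub_of_hasCompactSupport hν hgc hgs hr0 x).add
        tendsto_const_nhds) (Or.inr (by simp))
  · simp only [hJint]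
    exact tendsto_const_nhds
  · rw [hJint]
    exact ENNReal.mul_ne_top (by simp) (ENNReal.add_ne_top.mpr ⟨hgfin, hgfin⟩)

theorem tendsto_eLpNorm_convMeasure_sub (hν : Tendsto νs atTop (𝓝 ν)) {f : G → ℝ}
    (hf : StronglyMeasurable f) (hfp : MemLp f p μ) (hp1 : 1 ≤ p) (hp : p ≠ ∞) :
    Tendsto (fun n => eLpNorm (convMeasure f (νs n) - convMeasure f ν) p μ) atTop (𝓝 0) := by
  refine ENNReal.tendsto_nhds_zero.mpr fun ε hε => ?_
  have hε3 : 0 < ε / 3 := ENNReal.div_pos hε.ne' ENNReal.ofNat_ne_top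
  obtain ⟨g, hgs, hfg, hgc, hgp⟩ := hfp.exists_hasCompactSupport_eLpNorm_sub_le hp hε3.ne'
  have hgm : StronglyMeasurable g := hgc.stronglyMeasurable
  have hdm : StronglyMeasurable (f - g) := hf.sub hgm
  have hsplit : ∀ ρ : ProbabilityMeasure G,
      convMeasure f ρ =ᵐ[μ] convMeasure (f - g) ρ + convMeasure g ρ := fun ρ => by
    simpa using convMeasure_add_ae_eq (ν := (ρ : Measure G)) hdm (hfp.sub hgp) hgm hgp hp1 hp
  filter_upwards [ENNReal.tendsto_nhds_zero.mp
    (tendsto_eLpNorm_convMeasure_sub_of_hasCompactSupport (μ := μ) hν hgc hgs hp1 hp) (ε / 3) hε3]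
    with n hn
  calc eLpNorm (convMeasure f (νs n) - convMeasure f ν) p μ
      = eLpNorm (convMeasure (f - g) (νs n) + (convMeasure g (νs n) - convMeasure g ν)
          - convMeasure (f - g) ν) p μ :=
        eLpNorm_congr_ae <| (hsplit (νs n)).mp <| (hsplit ν).mono fun x h1 h2 => by
          simp only [Pi.sub_apply, Pi.add_apply, h1, h2]; abel
    _ ≤ eLpNorm (convMeasure (f - g) (νs n)) p μ
          + eLpNorm (convMeasure g (νs n) - convMeasure g ν) p μ
          + eLpNorm (convMeasure (f - g) ν) p μ := by
        refine (eLpNorm_sub_le (((hdm.convMeasure _).add ((hgm.convMeasure _).sub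
          (hgm.convMeasure _))).aestronglyMeasurable) (hdm.convMeasure _).aestronglyMeasurable
          hp1).trans ?_
        gcongr
        exact eLpNorm_add_le (hdm.convMeasure _).aestronglyMeasurable
          ((hgm.convMeasure _).sub (hgm.convMeasure _)).aestronglyMeasurable hp1
    _ ≤ ε / 3 + ε / 3 + ε / 3 := by
        gcongr
        · exact (eLpNorm_convMeasure_le hdm hp1 hp).trans hfg
        · exact (eLpNorm_convMeasure_le hdm hp1 hp).trans hfg
    _ = ε := ENNReal.add_thirds ε

end WeakConvergence

section MixedNorm

variable {S G E : Type*} [MeasurableSpace S] {σ : Measure S} [MeasurableSpace G]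
  [NormedAddCommGroup E] {μ : Measure G} {p : ℝ≥0∞} {q : ℝ}

theorem measurable_eLpNorm_of_uncurry [SFinite μ] {F : S → G → E}
    (hF : StronglyMeasurable (Function.uncurry F)) (hp0 : p ≠ 0) (hp : p ≠ ∞) :
    Measurable fun t => eLpNorm (F t) p μ := by
  simp_rw [eLpNorm_eq_lintegral_rpow_enorm_toReal hp0 hp]
  exact (hF.enorm.pow_const _).lintegral_prod_right'.pow_const _

theorem ae_memLp_of_eLpNorm'_ne_top [SFinite μ] {F : S → G → E}
    (hF : StronglyMeasurable (Function.uncurry F)) (hp0 : p ≠ 0) (hp : p ≠ ∞) (hq : 0 < q)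
    (hFq : eLpNorm' (fun t => eLpNorm (F t) p μ) q σ ≠ ∞) : ∀ᵐ t ∂σ, MemLp (F t) p μ := by
  have hfin := lintegral_rpow_enorm_lt_top_of_eLpNorm'_lt_top hq hFq.lt_top
  filter_upwards [ae_lt_top ((measurable_eLpNorm_of_uncurry hF hp0 hp).pow_const q) hfin.ne]
    with t ht
  exact ⟨(hF.comp_measurable measurable_prodMk_left).aestronglyMeasurable,
    (ENNReal.rpow_lt_top_iff_of_pos hq).mp ht⟩

variable [AddGroup G] [MeasurableSub₂ G] [NormedSpace ℝ E]

theorem stronglyMeasurable_uncurry_convMeasure {b : S → G → E}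
    (hb : StronglyMeasurable (Function.uncurry b)) {κ : S → Measure G} (hκ : Measurable κ)
    [∀ t, IsProbabilityMeasure (κ t)] :
    StronglyMeasurable (Function.uncurry fun t => convMeasure (b t) (κ t)) := by
  let η : ProbabilityTheory.Kernel (S × G) G := ⟨fun z => κ z.1, hκ.comp measurable_fst⟩
  have : ProbabilityTheory.IsMarkovKernel η :=
    ⟨fun z => inferInstanceAs (IsProbabilityMeasure (κ z.1))⟩
  exact (hb.comp_measurable (measurable_fst.fst.prodMk
    (measurable_fst.snd.sub measurable_snd))).integral_kernel_prod_right' (κ := η)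

variable [MeasurableAdd G] [μ.IsAddRightInvariant] [SFinite μ]

theorem eLpNorm'_eLpNorm_convMeasure_sub_le {b b' : S → G → E}
    (hb : StronglyMeasurable (Function.uncurry b)) (hb' : StronglyMeasurable (Function.uncurry b'))
    (hbp : ∀ᵐ t ∂σ, MemLp (b t) p μ) {κ κ' : S → Measure G} (hκ : Measurable κ)
    (hκ' : Measurable κ') [∀ t, IsProbabilityMeasure (κ t)] [∀ t, IsProbabilityMeasure (κ' t)]
    (hp1 : 1 ≤ p) (hp : p ≠ ∞) (hq : 1 ≤ q) :
    eLpNorm' (fun t => eLpNorm (convMeasure (b' t) (κ' t) - convMeasure (b t) (κ t)) p μ) q σ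
      ≤ eLpNorm' (fun t => eLpNorm (b' t - b t) p μ) q σ
        + eLpNorm' (fun t => eLpNorm (convMeasure (b t) (κ' t) - convMeasure (b t) (κ t)) p μ)
          q σ := by
  have hp0 : p ≠ 0 := (zero_lt_one.trans_le hp1).ne'
  have hdiff := measurable_eLpNorm_of_uncurry (μ := μ) (F := fun t => b' t - b t)
    (hb'.sub hb) hp0 hp
  have hconv := measurable_eLpNorm_of_uncurry (μ := μ)
    (F := fun t => convMeasure (b t) (κ' t) - convMeasure (b t) (κ t))
    ((stronglyMeasurable_uncurry_convMeasure hb hκ').sub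
      (stronglyMeasurable_uncurry_convMeasure hb hκ)) hp0 hp
  refine (eLpNorm'_mono_enorm_ae (by linarith) (hbp.mono fun t hbt => ?_)).trans
    (eLpNorm'_add_le hdiff.aestronglyMeasurable hconv.aestronglyMeasurable hq)
  exact eLpNorm_convMeasure_sub_convMeasure_le _ _
    (hb.comp_measurable measurable_prodMk_left) hbt
    (hb'.comp_measurable measurable_prodMk_left) hp1 hp

end MixedNorm

section Stability

variable {S G : Type*} [MeasurableSpace S] {σ : Measure S} [NormedAddCommGroup G]
  [MeasurableSpace G] [BorelSpace G] [SecondCountableTopology G] [LocallyCompactSpace G]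
  {μ : Measure G} [μ.IsAddRightInvariant] [μ.Regular] {p : ℝ≥0∞} {q : ℝ}

theorem tendsto_eLpNorm'_eLpNorm_convMeasure_sub {b : S → G → ℝ}
    (hb : StronglyMeasurable (Function.uncurry b))
    (hbq : eLpNorm' (fun t => eLpNorm (b t) p μ) q σ ≠ ∞)
    {κs : ℕ → S → ProbabilityMeasure G} {κ : S → ProbabilityMeasure G}
    (hκs : ∀ n, Measurable fun t => (κs n t : Measure G))
    (hκ : Measurable fun t => (κ t : Measure G))
    (hweak : ∀ᵐ t ∂σ, Tendsto (κs · t) atTop (𝓝 (κ t))) (hp1 : 1 ≤ p) (hp : p ≠ ∞)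
    (hq : 0 < q) :
    Tendsto (fun n => eLpNorm'
      (fun t => eLpNorm (convMeasure (b t) (κs n t) - convMeasure (b t) (κ t)) p μ) q σ)
      atTop (𝓝 0) := by
  have hp0 : p ≠ 0 := (zero_lt_one.trans_le hp1).ne'
  have hbm : ∀ t, StronglyMeasurable (b t) := fun t => hb.comp_measurable measurable_prodMk_left
  have hfin : ∫⁻ t, (2 * eLpNorm (b t) p μ) ^ q ∂σ ≠ ∞ := by
    simp_rw [ENNReal.mul_rpow_of_nonneg _ _ hq.le]
    rw [lintegral_const_mul' _ _ (by simp)]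
    exact ENNReal.mul_ne_top (by simp)
      (lintegral_rpow_enorm_lt_top_of_eLpNorm'_lt_top hq hbq.lt_top).ne
  refine tendsto_eLpNorm'_zero hq ?_
  simp only [enorm_eq_self]
  simpa using tendsto_lintegral_of_dominated_convergence (f := fun _ => 0)
    (fun t => (2 * eLpNorm (b t) p μ) ^ q)
    (fun n => (measurable_eLpNorm_of_uncurry
      ((stronglyMeasurable_uncurry_convMeasure hb (hκs n)).sub
        (stronglyMeasurable_uncurry_convMeasure hb hκ)) hp0 hp).pow_const q)
    (fun n => ae_of_all _ fun t =>
      ENNReal.rpow_le_rpow (eLpNorm_convMeasure_sub_le _ _ (hbm t) hp1 hp) hq.le)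
    hfin
    (by
      filter_upwards [hweak, ae_memLp_of_eLpNorm'_ne_top hb hp0 hp hq hbq] with t ht hbt
      simpa [ENNReal.zero_rpow_of_pos hq] using
        (tendsto_eLpNorm_convMeasure_sub ht (hbm t) hbt hp1 hp).ennrpow_const q)

end Stability

theorem stmt_15_general (d : ℕ) (T p q : ℝ) (hp : 1 ≤ p) (hq : 1 ≤ q)
    (b : ℝ → (Fin d → ℝ) → ℝ) (bn : ℕ → ℝ → (Fin d → ℝ) → ℝ)
    (hbmeas : Measurable fun z : ℝ × (Fin d → ℝ) => b z.1 z.2)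
    (hbnmeas : ∀ n, Measurable fun z : ℝ × (Fin d → ℝ) => bn n z.1 z.2)
    (hbmem : (∫⁻ t in Set.Icc (0:ℝ) T,
        (eLpNorm (b t) (ENNReal.ofReal p) volume) ^ q) ^ (1 / q) < ⊤)
    (hconv : Tendsto (fun n =>
        (∫⁻ t in Set.Icc (0:ℝ) T,
          (eLpNorm (fun x => bn n t x - b t x) (ENNReal.ofReal p) volume) ^ q) ^ (1 / q))
      atTop (𝓝 0))
    (μ : ℝ → Measure (Fin d → ℝ)) (μn : ℕ → ℝ → Measure (Fin d → ℝ))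
    (hμprob : ∀ t, IsProbabilityMeasure (μ t))
    (hμnprob : ∀ n t, IsProbabilityMeasure (μn n t))
    (hμmeas : Measurable μ) (hμnmeas : ∀ n, Measurable (μn n))
    (hweak : ∀ t ∈ Set.Icc (0:ℝ) T, ∀ g : BoundedContinuousFunction (Fin d → ℝ) ℝ,
      Tendsto (fun n => ∫ x, g x ∂(μn n t)) atTop (𝓝 (∫ x, g x ∂(μ t)))) :
    Tendsto (fun n =>
        (∫⁻ t in Set.Icc (0:ℝ) T,
          (eLpNorm (fun x => (∫ y, bn n t (x - y) ∂(μn n t)) - ∫ y, b t (x - y) ∂(μ t))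
            (ENNReal.ofReal p) volume) ^ q) ^ (1 / q))
      atTop (𝓝 0) := by
  have hP1 : 1 ≤ ENNReal.ofReal p := ENNReal.one_le_ofReal.mpr hp
  let P : ℝ → ProbabilityMeasure (Fin d → ℝ) := fun t => ⟨μ t, hμprob t⟩
  let Pn : ℕ → ℝ → ProbabilityMeasure (Fin d → ℝ) := fun n t => ⟨μn n t, hμnprob n t⟩
  have hb : StronglyMeasurable (Function.uncurry b) := hbmeas.stronglyMeasurable
  have hPn : ∀ᵐ t ∂volume.restrict (Icc 0 T), Tendsto (Pn · t) atTop (𝓝 (P t)) :=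
    (ae_restrict_mem measurableSet_Icc).mono fun t ht =>
      ProbabilityMeasure.tendsto_iff_forall_integral_tendsto.mpr (hweak t ht)
  have hlim := hconv.add (tendsto_eLpNorm'_eLpNorm_convMeasure_sub (κs := Pn) (κ := P) hb hbmem.ne
    hμnmeas hμmeas hPn hP1 ENNReal.ofReal_ne_top (zero_lt_one.trans_le hq))
  rw [add_zero] at hlim
  refine tendsto_of_tendsto_of_tendsto_of_le_of_le tendsto_const_nhds hlim (fun _ => zero_le)
    fun n => ?_
  exact eLpNorm'_eLpNorm_convMeasure_sub_le hb (hbnmeas n).stronglyMeasurable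
    (ae_memLp_of_eLpNorm'_ne_top hb (zero_lt_one.trans_le hP1).ne' ENNReal.ofReal_ne_top
      (zero_lt_one.trans_le hq) hbmem.ne) hμmeas (hμnmeas n) hP1 ENNReal.ofReal_ne_top hq

/-- Stability of convolutions in mixed norms: if `b^n → b` in `L^q([0,T];L^p(ℝ^d))` and
`μ^n_t ⇀ μ_t` weakly for every `t`, then `b^n_t ∗ μ^n_t → b_t ∗ μ_t` in
`L^q([0,T];L^p(ℝ^d))`. -/
theorem stmt_15 (d : ℕ) (T p q : ℝ) (hT : 0 < T) (hp : 1 ≤ p) (hq : 1 ≤ q)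
    (b : ℝ → (Fin d → ℝ) → ℝ) (bn : ℕ → ℝ → (Fin d → ℝ) → ℝ)
    (hbmeas : Measurable fun z : ℝ × (Fin d → ℝ) => b z.1 z.2)
    (hbnmeas : ∀ n, Measurable fun z : ℝ × (Fin d → ℝ) => bn n z.1 z.2)
    (hbmem : (∫⁻ t in Set.Icc (0:ℝ) T,
        (eLpNorm (b t) (ENNReal.ofReal p) volume) ^ q) ^ (1 / q) < ⊤)
    (hconv : Tendsto (fun n =>
        (∫⁻ t in Set.Icc (0:ℝ) T,
          (eLpNorm (fun x => bn n t x - b t x) (ENNReal.ofReal p) volume) ^ q) ^ (1 / q))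
      atTop (𝓝 0))
    (μ : ℝ → Measure (Fin d → ℝ)) (μn : ℕ → ℝ → Measure (Fin d → ℝ))
    (hμprob : ∀ t, IsProbabilityMeasure (μ t))
    (hμnprob : ∀ n t, IsProbabilityMeasure (μn n t))
    (hμmeas : Measurable μ) (hμnmeas : ∀ n, Measurable (μn n))
    (hweak : ∀ t ∈ Set.Icc (0:ℝ) T, ∀ g : BoundedContinuousFunction (Fin d → ℝ) ℝ,
      Tendsto (fun n => ∫ x, g x ∂(μn n t)) atTop (𝓝 (∫ x, g x ∂(μ t)))) :
    Tendsto (fun n =>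
        (∫⁻ t in Set.Icc (0:ℝ) T,
          (eLpNorm (fun x => (∫ y, bn n t (x - y) ∂(μn n t)) - ∫ y, b t (x - y) ∂(μ t))
            (ENNReal.ofReal p) volume) ^ q) ^ (1 / q))
      atTop (𝓝 0) :=
  stmt_15_general d T p q hp hq b bn hbmeas hbnmeas hbmem hconv μ μn hμprob hμnprob hμmeas hμnmeas
    hweak
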